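/- arXiv:1907.12074 — 2 statements merged into one kernel-verified Lean document; each statement's English description precedes it below -/
import Mathlib

section
/- Let 1 ≤ k ≤ n−2 and let T = T^↘_{(n−k,⋆)} be the diagonal tableau of shape (n−k,⋆). Then for every m ∈ {1,…,n}, if (i,j) is the box of (n−k,⋆) with T(i,j) = m, one has j − i + 1 ≤ ((n−k)/n)·m. -/
/-- The partition `(n−k,⋆)` of `n`: as many rows of length `n−k` as possible, the last row
holding the remainder.  Its cells are exactly the (0-indexed) `(i,j)` with `j < n−k` and
`i·(n−k) + j < n`; 1-indexed, rows `1,…,l−1` have length `n−k` and row `l = ⌈n/(n−k)⌉`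
has length `n − (l−1)(n−k)`. -/
def nkStar (n k : ℕ) : YoungDiagram where
  cells := (Finset.range n ×ˢ Finset.range n).filter
    (fun c => c.1 * (n - k) + c.2 < n ∧ c.2 < n - k)
  isLowerSet := by
    intro a b hab ha
    simp only [Finset.coe_filter, Set.mem_setOf_eq, Finset.mem_product, Finset.mem_range]
      at ha ⊢
    have h1 : b.1 ≤ a.1 := hab.1
    have h2 : b.2 ≤ a.2 := hab.2
    have hmul : b.1 * (n - k) ≤ a.1 * (n - k) := Nat.mul_le_mul_right _ h1
    obtain ⟨⟨ha1, ha2⟩, ha3, ha4⟩ := ha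
    exact ⟨⟨lt_of_le_of_lt h1 ha1, lt_of_le_of_lt h2 ha2⟩, by omega, by omega⟩

/-- The diagonal tableau `T^↘_μ` : `μ` is filled with `1,…,n` diagonal by diagonal from
left to right, each diagonal from top to bottom; explicitly
`T(i,j) = #{(i′,j′) ∈ μ : j′−i′ < j−i} + #{(i′,j′) ∈ μ : j′−i′ = j−i and i′ ≤ i}`. -/
def diagFill (μ : YoungDiagram) (c : ℕ × ℕ) : ℕ :=
  (μ.cells.filter (fun d => (d.2 : ℤ) - (d.1 : ℤ) < (c.2 : ℤ) - (c.1 : ℤ))).card +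
  (μ.cells.filter (fun d => (d.2 : ℤ) - (d.1 : ℤ) = (c.2 : ℤ) - (c.1 : ℤ) ∧ d.1 ≤ c.1)).card

lemma mem_nkStar (n k a b : ℕ) :
    (a, b) ∈ (nkStar n k).cells ↔ a < n ∧ b < n ∧ a * (n - k) + b < n ∧ b < n - k := by
  simp [nkStar, and_assoc]

def lamRow (n k i' : ℕ) : ℕ := min (n - k) (n - i' * (n - k))

def bRow (n k i j i' : ℕ) : ℕ := min (lamRow n k i') ((i' + j) - i)

lemma sum_min_row (q n : ℕ) (hq : 1 ≤ q) :
    ∀ M, (∑ i ∈ Finset.range M, min q (n - i * q)) = min n (M * q) := by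
  intro M
  induction M with
  | zero => simp
  | succ M ih =>
      rw [Finset.sum_range_succ, ih, show (M+1)*q = M*q+q from by ring]
      generalize M * q = t
      omega

lemma row_ineq (q l i j i' : ℕ) (h1 : l ≤ q) (h2 : j < q) (h3 : 1 ≤ i') :
    l * (j + 1) ≤ q * min l ((i' + j) - i) + l * i := by
  rcases Nat.le_total l ((i' + j) - i) with h | h
  · rw [min_eq_left h]
    calc l * (j + 1) ≤ l * q := mul_le_mul_right (show j + 1 ≤ q by omega) l
      _ = q * l := mul_comm l q
      _ ≤ q * l + l * i := Nat.le_add_right _ _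
  · rw [min_eq_right h]
    rcases Nat.lt_or_ge j i with hji | hji
    · calc l * (j + 1) ≤ l * i := mul_le_mul_right hji l
        _ ≤ q * ((i' + j) - i) + l * i := Nat.le_add_left _ _
    · obtain ⟨u, rfl⟩ : ∃ u, j = i + u := ⟨j - i, by omega⟩
      rw [show (i' + (i + u)) - i = i' + u from by omega]
      have h4 : l * (i + u + 1) = l * i + l * (u + 1) := by ring
      have h5 : l * (u + 1) ≤ q * (u + 1) := mul_le_mul_left h1 (u + 1)
      have h6 : q * (u + 1) ≤ q * (i' + u) := mul_le_mul_right (show u + 1 ≤ i' + u by omega) q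
      linarith

lemma key (n k : ℕ) (hk1 : 1 ≤ k) (hk2 : k ≤ n - 2) (i j : ℕ)
    (hc : (i, j) ∈ (nkStar n k).cells) :
    n * (j + 1) ≤ (n - k) * diagFill (nkStar n k) (i, j) + n * i := by
  have hn : 3 ≤ n := by omega
  have hq2 : 2 ≤ n - k := by omega
  obtain ⟨hin, hjn, hij, hjq⟩ := (mem_nkStar n k i j).mp hc
  -- bound on the second (equal-diagonal) card
  have hF2 : min i j + 1 ≤ ((nkStar n k).cells.filter
      (fun d => (d.2 : ℤ) - (d.1 : ℤ) = (j : ℤ) - (i : ℤ) ∧ d.1 ≤ i)).card := by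
    have h := Finset.card_le_card_of_injOn (s := Finset.range (min i j + 1))
      (t := (nkStar n k).cells.filter
        (fun d => (d.2 : ℤ) - (d.1 : ℤ) = (j : ℤ) - (i : ℤ) ∧ d.1 ≤ i))
      (fun t => (i - t, j - t)) ?_ ?_
    · simpa using h
    · intro t ht
      simp only [Finset.mem_coe, Finset.mem_range] at ht
      have ht1 : t ≤ i := by omega
      have ht2 : t ≤ j := by omega
      have hm : (i - t) * (n - k) + (j - t) < n := by
        have h1 : (i - t) * (n - k) ≤ i * (n - k) :=
          mul_le_mul_left (Nat.sub_le i t) (n - k)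
        have h2 : (j - t) ≤ j := Nat.sub_le j t
        exact lt_of_le_of_lt (Nat.add_le_add h1 h2) hij
      simp only [Finset.mem_coe, Finset.mem_filter, mem_nkStar]
      refine ⟨⟨by omega, by omega, hm, by omega⟩, by omega, by omega⟩
    · intro a ha b hb hab
      simp only [Finset.coe_range, Set.mem_Iio] at ha hb
      have h2 := congrArg Prod.snd hab
      simp only at h2
      omega
  -- bound on the first (smaller-diagonal) card
  have hF1 : (∑ i' ∈ Finset.range n, bRow n k i j i')
      ≤ ((nkStar n k).cells.filter
        (fun d => (d.2 : ℤ) - (d.1 : ℤ) < (j : ℤ) - (i : ℤ))).card := by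
    set F := (nkStar n k).cells.filter
        (fun d => (d.2 : ℤ) - (d.1 : ℤ) < (j : ℤ) - (i : ℤ)) with hF
    have hfib : F.card = ∑ i' ∈ Finset.range n, (F.filter (fun x => x.1 = i')).card := by
      apply Finset.card_eq_sum_card_fiberwise
      intro x hx
      rw [hF, Finset.mem_coe, Finset.mem_filter] at hx
      obtain ⟨a, b⟩ := x
      rw [mem_nkStar] at hx
      simp only [Finset.mem_coe, Finset.mem_range]
      exact hx.1.1
    rw [hfib]
    apply Finset.sum_le_sum
    intro i' hi'
    simp only [Finset.mem_range] at hi'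
    have h := Finset.card_le_card_of_injOn (s := Finset.range (bRow n k i j i'))
      (t := F.filter (fun x => x.1 = i'))
      (fun t => (i', t)) ?_ ?_
    · simpa using h
    · intro t ht
      simp only [Finset.mem_coe, Finset.mem_range, bRow, lamRow] at ht
      have ht1 : t < n - k := by omega
      have ht2 : t < n - i' * (n - k) := by omega
      have ht3 : t + i < i' + j := by omega
      simp only [hF, Finset.mem_coe, Finset.mem_filter, mem_nkStar]
      refine ⟨⟨⟨by omega, by omega, by omega, by omega⟩, by omega⟩, trivial⟩
    · intro a ha b hb hab
      have h2 := congrArg Prod.snd hab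
      simp only at h2
      omega
  -- sum of row lengths is n
  have hsum : ∑ i' ∈ Finset.range n, lamRow n k i' = n := by
    have h1 := sum_min_row (n - k) n (by omega) n
    have h2 : n ≤ n * (n - k) := Nat.le_mul_of_pos_right n (by omega)
    simp only [lamRow]
    rw [h1]
    exact min_eq_left h2
  -- per-row inequality
  have hrow : ∀ i' ∈ Finset.range n,
      lamRow n k i' * (j+1) ≤ (n-k) * bRow n k i j i' + lamRow n k i' * i
        + (if i' = 0 then (n-k) * (min i j + 1) else 0) := by
    intro i' _
    rcases Nat.eq_zero_or_pos i' with rfl | hpos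
    · simp only [if_pos rfl]
      have hl0 : lamRow n k 0 = n - k := by
        simp only [lamRow, Nat.zero_mul, Nat.sub_zero]
        omega
      have hB0 : bRow n k i j 0 = min (n - k) (j - i) := by
        simp only [bRow, hl0, Nat.zero_add]
      rw [hl0, hB0]
      have hh : (j+1) ≤ min (n-k) (j - i) + i + (min i j + 1) := by omega
      calc (n-k) * (j+1) ≤ (n-k) * (min (n-k) (j-i) + i + (min i j + 1)) :=
            mul_le_mul_right hh (n-k)
        _ = (n-k) * min (n-k) (j-i) + (n-k) * i + (n-k) * (min i j + 1) := by ring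
        _ ≤ (n-k) * min (n-k) (j-i) + (n-k) * i + (n-k) * (min i j + 1) := le_refl _
    · simp only [if_neg (by omega : ¬ i' = 0), Nat.add_zero]
      exact row_ineq (n-k) (lamRow n k i') i j i' (min_le_left _ _) hjq hpos
  -- combine
  have main : n * (j+1) ≤ (n-k) * (∑ i' ∈ Finset.range n, bRow n k i j i')
      + n * i + (n-k) * (min i j + 1) := by
    calc n * (j+1) = (∑ i' ∈ Finset.range n, lamRow n k i') * (j+1) := by rw [hsum]
      _ = ∑ i' ∈ Finset.range n, lamRow n k i' * (j+1) := Finset.sum_mul _ _ _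
      _ ≤ ∑ i' ∈ Finset.range n, ((n-k) * bRow n k i j i' + lamRow n k i' * i
            + (if i' = 0 then (n-k) * (min i j + 1) else 0)) := Finset.sum_le_sum hrow
      _ = (n-k) * (∑ i' ∈ Finset.range n, bRow n k i j i')
            + (∑ i' ∈ Finset.range n, lamRow n k i') * i + (n-k) * (min i j + 1) := by
          rw [Finset.sum_add_distrib, Finset.sum_add_distrib, ← Finset.mul_sum,
            ← Finset.sum_mul, Finset.sum_ite_eq' (Finset.range n) 0,
            if_pos (Finset.mem_range.mpr (by omega : 0 < n))]
      _ = (n-k) * (∑ i' ∈ Finset.range n, bRow n k i j i') + n * i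
            + (n-k) * (min i j + 1) := by rw [hsum]
  have hdf : diagFill (nkStar n k) (i, j)
      = ((nkStar n k).cells.filter
          (fun d => (d.2 : ℤ) - (d.1 : ℤ) < (j : ℤ) - (i : ℤ))).card
        + ((nkStar n k).cells.filter
          (fun d => (d.2 : ℤ) - (d.1 : ℤ) = (j : ℤ) - (i : ℤ) ∧ d.1 ≤ i)).card := rfl
  rw [hdf, Nat.mul_add]
  have e1 := mul_le_mul_right hF1 (n-k)
  have e2 := mul_le_mul_right hF2 (n-k)
  linarith

/-- for `1 ≤ k ≤ n−2` and every box of the diagonal tableau of `(n−k,⋆)`,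
if the box `(i,j)` carries the entry `m` then `j − i + 1 ≤ ((n−k)/n)·m`. -/
theorem diagFill_box_bound (n k : ℕ) (hk1 : 1 ≤ k) (hk2 : k ≤ n - 2) :
    ∀ c ∈ (nkStar n k).cells,
      ((c.2 : ℝ) - (c.1 : ℝ) + 1) ≤
        (((n : ℝ) - (k : ℝ)) / (n : ℝ)) * (diagFill (nkStar n k) c : ℝ) := by
  intro c hc
  obtain ⟨i, j⟩ := c
  have hkey := key n k hk1 hk2 i j hc
  have hn : 3 ≤ n := by omega
  have hkn : k ≤ n := by omega
  set m := diagFill (nkStar n k) (i, j) with hm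
  have hcast : (n : ℝ) * (j + 1) ≤ ((n : ℝ) - k) * m + n * i := by
    have h2 : ((n * (j+1) : ℕ) : ℝ) ≤ (((n - k) * m + n * i : ℕ) : ℝ) := Nat.cast_le.mpr hkey
    push_cast [Nat.cast_sub hkn] at h2
    linarith
  have hn0 : (0:ℝ) < n := by positivity
  rw [div_mul_eq_mul_div, le_div_iff₀ hn0]
  simp only
  nlinarith [hcast]
end

section
/- Let n ≥ 1, let w = w₁·…·w_n be a word of length n with letters in {1,…,n}, and let a ∈ {1,…,n+1}. Then, in the complex vector space spanned by words of length n+1, (Q_{n+1} ∘ Φ_a)(w) − (Φ_a ∘ Q_n)(w) = (1/(n+1))·Φ_a(w) + (1/(n+1))·Σ_{b=1}^{n} (Φ_b ∘ Θ_{b,a})(w). -/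
/-!
STATEMENT 19: the master equation
`(Q_{n+1} ∘ Φ_a)(w) − (Φ_a ∘ Q_n)(w) = (1/(n+1))·Φ_a(w) + (1/(n+1))·Σ_{b=1}^n (Φ_b ∘ Θ_{b,a})(w)`.

A word of length `n` is a function `Fin n → ℕ` (position `k : Fin n` is position `k+1`
of the paper; letters are the values).  `M^n` is the free complex vector space on words,
modelled as `(Fin n → ℕ) →₀ ℂ`, a word `w` being identified with `Finsupp.single w 1`.
`S_n` acts by place permutations `σ(w) = w ∘ σ⁻¹`, and the scaled one-sided transposition
operator is `Q_n = Σ_{1 ≤ i ≤ j ≤ n} (1/j)·(i j)`.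
-/

/-- Words of length `n` (values are the letters, in `ℕ`). -/
abbrev Word (n : ℕ) := Fin n → ℕ

/-- `M^n`, the free complex vector space on the words of length `n`. -/
abbrev WordSpace (n : ℕ) := Word n →₀ ℂ

/-- The linear action of `σ ∈ S_n` on `M^n` by place permutations. -/
noncomputable def permOp (n : ℕ) (σ : Equiv.Perm (Fin n)) :
    WordSpace n →ₗ[ℂ] WordSpace n :=
  Finsupp.lmapDomain ℂ ℂ (fun w : Word n => fun p => w (σ⁻¹ p))

/-- The scaled one-sided transposition operator `Q_n = Σ_{1 ≤ i ≤ j ≤ n} (1/j)·(i j)`. -/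
noncomputable def Qop (n : ℕ) : WordSpace n →ₗ[ℂ] WordSpace n :=
  ∑ j : Fin n, ∑ i : Fin n,
    if i ≤ j then ((1 : ℂ) / (((j : ℕ) : ℂ) + 1)) • permOp n (Equiv.swap i j) else 0

/-- The adding operator `Φ_a : M^n → M^{n+1}`, appending the letter `a`. -/
noncomputable def addOp (n : ℕ) (a : ℕ) : WordSpace n →ₗ[ℂ] WordSpace (n + 1) :=
  Finsupp.lmapDomain ℂ ℂ (fun w : Word n => Fin.snoc w a)

/-- The switching operator `Θ_{b,a} : M^n → M^n`: a word `w` is sent to the sum, over all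
positions `k` holding the letter `b`, of the word obtained by replacing that occurrence
of `b` by `a`. -/
noncomputable def switchOp (n : ℕ) (b a : ℕ) : WordSpace n →ₗ[ℂ] WordSpace n :=
  Finsupp.lift (WordSpace n) ℂ (Word n)
    (fun w => ∑ k ∈ Finset.univ.filter (fun k : Fin n => w k = b),
      Finsupp.single (Function.update w k a) (1 : ℂ))


lemma permOp_single (n : ℕ) (σ : Equiv.Perm (Fin n)) (w : Word n) :
    permOp n σ (Finsupp.single w 1) = Finsupp.single (fun p => w (σ⁻¹ p)) 1 := by
  simp [permOp]

lemma addOp_single (n a : ℕ) (w : Word n) :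
    addOp n a (Finsupp.single w 1) = Finsupp.single (Fin.snoc w a) 1 := by
  simp [addOp]

lemma switchOp_single (n b a : ℕ) (w : Word n) :
    switchOp n b a (Finsupp.single w (1 : ℂ))
      = ∑ k ∈ Finset.univ.filter (fun k : Fin n => w k = b),
          Finsupp.single (Function.update w k a) (1 : ℂ) := by
  simp [switchOp, Finsupp.lift_apply, Finsupp.sum_single_index]

lemma Qop_single (n : ℕ) (w : Word n) :
    Qop n (Finsupp.single w (1 : ℂ)) = ∑ j : Fin n, ∑ i : Fin n,
      if i ≤ j then ((1 : ℂ) / (((j : ℕ) : ℂ) + 1)) •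
        Finsupp.single (fun p => w (Equiv.swap i j p)) (1 : ℂ) else 0 := by
  simp only [Qop, LinearMap.sum_apply]
  refine Finset.sum_congr rfl fun j _ => Finset.sum_congr rfl fun i _ => ?_
  split_ifs with h
  · simp [permOp_single, Equiv.swap_inv]
  · simp

lemma wordA (n : ℕ) (w : Word n) (a : ℕ) (i j : Fin n) :
    (fun p => (Fin.snoc w a : Word (n + 1)) (Equiv.swap i.castSucc j.castSucc p))
      = Fin.snoc (fun p => w (Equiv.swap i j p)) a := by
  funext p
  refine Fin.lastCases ?_ (fun q => ?_) p
  · rw [Equiv.swap_apply_of_ne_of_ne (Fin.castSucc_lt_last i).ne' (Fin.castSucc_lt_last j).ne']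
    simp
  · have h : Equiv.swap i.castSucc j.castSucc q.castSucc = (Equiv.swap i j q).castSucc := by
      rcases eq_or_ne q i with rfl | hqi
      · simp
      · rcases eq_or_ne q j with rfl | hqj
        · simp [Equiv.swap_apply_right]
        · rw [Equiv.swap_apply_of_ne_of_ne (fun h => hqi (Fin.castSucc_inj.mp h))
            (fun h => hqj (Fin.castSucc_inj.mp h)),
            Equiv.swap_apply_of_ne_of_ne hqi hqj]
    rw [h]
    simp

lemma wordB (n : ℕ) (w : Word n) (a : ℕ) (k : Fin n) :
    (fun p => (Fin.snoc w a : Word (n + 1)) (Equiv.swap k.castSucc (Fin.last n) p))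
      = Fin.snoc (Function.update w k a) (w k) := by
  funext p
  refine Fin.lastCases ?_ (fun q => ?_) p
  · rw [Equiv.swap_apply_right]
    simp
  · rcases eq_or_ne q k with rfl | hqk
    · rw [Equiv.swap_apply_left]
      simp
    · rw [Equiv.swap_apply_of_ne_of_ne (fun h => hqk (Fin.castSucc_inj.mp h))
        (Fin.castSucc_lt_last q).ne]
      simp [Function.update_of_ne hqk]

theorem master_equation (n : ℕ) (hn : 1 ≤ n) (w : Word n)
    (hw : ∀ k, 1 ≤ w k ∧ w k ≤ n) (a : ℕ) (ha : 1 ≤ a ∧ a ≤ n + 1) :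
    Qop (n + 1) (addOp n a (Finsupp.single w 1)) -
        addOp n a (Qop n (Finsupp.single w 1)) =
      ((1 : ℂ) / ((n : ℂ) + 1)) • addOp n a (Finsupp.single w 1) +
        ((1 : ℂ) / ((n : ℂ) + 1)) •
          ∑ b ∈ Finset.Icc 1 n, addOp n b (switchOp n b a (Finsupp.single w 1)) := by
  rw [addOp_single, Qop_single, Qop_single]
  -- compute the pushed-forward Q_n term
  have hpush : addOp n a (∑ j : Fin n, ∑ i : Fin n,
      if i ≤ j then ((1 : ℂ) / (((j : ℕ) : ℂ) + 1)) •
        Finsupp.single (fun p => w (Equiv.swap i j p)) (1 : ℂ) else 0)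
      = ∑ j : Fin n, ∑ i : Fin n,
      if i ≤ j then ((1 : ℂ) / (((j : ℕ) : ℂ) + 1)) •
        Finsupp.single (Fin.snoc (fun p => w (Equiv.swap i j p)) a) (1 : ℂ) else 0 := by
    rw [map_sum]
    refine Finset.sum_congr rfl fun j _ => ?_
    rw [map_sum]
    refine Finset.sum_congr rfl fun i _ => ?_
    split_ifs with h
    · rw [map_smul, addOp_single]
    · rw [map_zero]
  rw [hpush]
  rw [Fin.sum_univ_castSucc (n := n)]
  have hA : (∑ j : Fin n, ∑ i : Fin (n + 1),
      if i ≤ j.castSucc then ((1 : ℂ) / (((j.castSucc : ℕ) : ℂ) + 1)) •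
        Finsupp.single (fun p => (Fin.snoc w a : Word (n + 1))
          (Equiv.swap i j.castSucc p)) (1 : ℂ) else 0)
      = ∑ j : Fin n, ∑ i : Fin n,
      if i ≤ j then ((1 : ℂ) / (((j : ℕ) : ℂ) + 1)) •
        Finsupp.single (Fin.snoc (fun p => w (Equiv.swap i j p)) a) (1 : ℂ) else 0 := by
    refine Finset.sum_congr rfl fun j _ => ?_
    rw [Fin.sum_univ_castSucc (n := n)]
    rw [if_neg (not_le.mpr (Fin.castSucc_lt_last j)), add_zero]
    refine Finset.sum_congr rfl fun i _ => ?_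
    simp only [Fin.castSucc_le_castSucc_iff, Fin.coe_castSucc]
    split_ifs with h
    · rw [wordA]
    · rfl
  rw [hA, add_sub_cancel_left]
  -- the leftover `j = last` part
  have hc : (((Fin.last n : ℕ) : ℂ) + 1) = ((n : ℂ) + 1) := by simp
  have hB : (∑ i : Fin (n + 1),
      if i ≤ Fin.last n then ((1 : ℂ) / (((Fin.last n : ℕ) : ℂ) + 1)) •
        Finsupp.single (fun p => (Fin.snoc w a : Word (n + 1))
          (Equiv.swap i (Fin.last n) p)) (1 : ℂ) else 0)
      = (∑ k : Fin n, ((1 : ℂ) / ((n : ℂ) + 1)) •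
          Finsupp.single (Fin.snoc (Function.update w k a) (w k)) (1 : ℂ))
        + ((1 : ℂ) / ((n : ℂ) + 1)) • Finsupp.single (Fin.snoc w a) (1 : ℂ) := by
    rw [Fin.sum_univ_castSucc (n := n)]
    congr 1
    · refine Finset.sum_congr rfl fun k _ => ?_
      rw [if_pos (Fin.le_last _), wordB, hc]
    · rw [if_pos le_rfl, hc, Equiv.swap_self]
      congr 1
  rw [hB]
  -- compute the RHS switching sum
  have hR : (∑ b ∈ Finset.Icc 1 n, addOp n b (switchOp n b a (Finsupp.single w 1)))
      = ∑ k : Fin n, Finsupp.single (Fin.snoc (Function.update w k a) (w k)) (1 : ℂ) := by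
    have : ∀ b ∈ Finset.Icc 1 n, addOp n b (switchOp n b a (Finsupp.single w 1))
        = ∑ k ∈ Finset.univ.filter (fun k : Fin n => w k = b),
            Finsupp.single (Fin.snoc (Function.update w k a) (w k)) (1 : ℂ) := by
      intro b _
      rw [switchOp_single, map_sum]
      refine Finset.sum_congr rfl fun k hk => ?_
      rw [addOp_single]
      have : w k = b := (Finset.mem_filter.mp hk).2
      rw [this]
    rw [Finset.sum_congr rfl this]
    exact Finset.sum_fiberwise_of_maps_to
      (fun k _ => Finset.mem_Icc.mpr ⟨(hw k).1, (hw k).2⟩) _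
  rw [hR, Finset.smul_sum]
  exact add_comm _ _
end
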